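/- arXiv:1802.07757 — 3 statements merged into one kernel-verified Lean document; each statement's English description precedes it below -/
import Mathlib

section
/- Let w be a classical solution of the homogeneous heat equation with homogeneous Dirichlet boundary conditions on a nonempty bounded open set Ω ⊂ ℝ^d over the time interval [0,T] with diffusion coefficient a > 0. Then for every t ∈ [0,T] and every x in the closure of Ω, |w(t,x)| ≤ sup_{y ∈ closure(Ω)} |w(0,y)|. (This is the maximum-principle bound ‖e^{tΔ}w₀‖_{L^∞(Ω)} ≤ ‖w₀‖_{L^∞(Ω)} of Theorem 3.1, stated for classical solutions.) -/
open Set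

/-- The Laplacian of a function `u : ℝ^d → ℝ`, defined as the sum of the second
directional derivatives along the standard basis directions. -/
noncomputable def heatLaplacian {d : ℕ} (u : EuclideanSpace ℝ (Fin d) → ℝ)
    (x : EuclideanSpace ℝ (Fin d)) : ℝ :=
  ∑ i : Fin d,
    fderiv ℝ (fun y => fderiv ℝ u y (EuclideanSpace.single i (1 : ℝ))) x
      (EuclideanSpace.single i (1 : ℝ))

/-- `w` is a classical solution of the homogeneous heat equation `∂ₜ w = a Δ w` on `Ω`
over the time interval `[0, T]`, with homogeneous Dirichlet boundary conditions. -/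
structure IsClassicalHeatSolution {d : ℕ} (Ω : Set (EuclideanSpace ℝ (Fin d))) (a T : ℝ)
    (w : ℝ → EuclideanSpace ℝ (Fin d) → ℝ) : Prop where
  continuousOn :
    ContinuousOn (fun p : ℝ × EuclideanSpace ℝ (Fin d) => w p.1 p.2)
      (Icc 0 T ×ˢ closure Ω)
  space_smooth : ∀ t ∈ Ioc 0 T, ∀ x ∈ Ω, ∃ U ∈ nhds x, ContDiffOn ℝ 2 (w t) U
  heat_eq : ∀ t ∈ Ioc 0 T, ∀ x ∈ Ω,
    HasDerivAt (fun τ => w τ x) (a * heatLaplacian (w t) x) t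
  boundary : ∀ t ∈ Icc 0 T, ∀ x ∈ frontier Ω, w t x = 0

/-!
For `ε > 0`, the maximum of `w - εt` over the compact cylinder `[0,T] × cl(Ω)` cannot lie at an
interior point `x ∈ Ω` with `t > 0`: there the maximum in time (approached from the left) gives
`∂ₜw - ε ≥ 0` and the maximum in space gives `Δw ≤ 0`, contradicting `∂ₜw - ε = aΔw - ε < 0`.
Hence it lies on the parabolic boundary, where `w - εt` is at most `sup |w(0,·)|` (it is `≤ 0` on
`∂Ω`). Letting `ε → 0` bounds `w`, and applying this to `-w` bounds `|w|`.
-/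

open Filter Topology

theorem IsLocalMax.deriv_deriv_nonpos {f : ℝ → ℝ} {x₀ : ℝ} (h : IsLocalMax f x₀)
    (hc : ContinuousAt f x₀) : deriv (deriv f) x₀ ≤ 0 := by
  by_contra! hpos
  have hconst : f =ᶠ[𝓝 x₀] fun _ => f x₀ :=
    ((isLocalMin_of_deriv_deriv_pos hpos h.deriv_eq_zero hc).and h).mono
      fun x hx => le_antisymm hx.2 hx.1
  have hderiv : deriv f =ᶠ[𝓝 x₀] fun _ => 0 :=
    hconst.eventuallyEq_nhds.mono fun x hx => by rw [hx.deriv_eq, deriv_const]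
  rw [hderiv.deriv_eq, deriv_const] at hpos
  exact lt_irrefl _ hpos

theorem IsLocalMaxOn.hasDerivWithinAt_Iic_nonneg {f : ℝ → ℝ} {f' t : ℝ}
    (h : IsLocalMaxOn f (Iic t) t) (hf : HasDerivWithinAt f f' (Iic t) t) : 0 ≤ f' := by
  have hcone : (-1 : ℝ) ∈ posTangentConeAt (Iic t) t :=
    mem_posTangentConeAt_of_segment_subset (by
      rw [segment_eq_Icc']; exact fun s hs => hs.2.trans (by simp))
  simpa using h.hasFDerivWithinAt_nonpos hf hcone

theorem IsLocalMax.fderiv_fderiv_apply_nonpos {E : Type*} [NormedAddCommGroup E]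
    [NormedSpace ℝ E] {u : E → ℝ} {x₀ : E} (h : IsLocalMax u x₀) (hu : ContDiffAt ℝ 2 u x₀)
    (v : E) : fderiv ℝ (fun y => fderiv ℝ u y v) x₀ v ≤ 0 := by
  set L : ℝ → E := fun s => x₀ + s • v
  have hL : ∀ s, HasDerivAt L v s := fun s => by
    simpa [L] using ((hasDerivAt_id s).smul_const v).const_add x₀
  have hL0 : L 0 = x₀ := by simp [L]
  rw [← hL0] at h hu ⊢
  have hLtend : Tendsto L (𝓝 0) (𝓝 (L 0)) := (hL 0).continuousAt.tendsto
  have hderiv : deriv (u ∘ L) =ᶠ[𝓝 0] fun s => fderiv ℝ u (L s) v := by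
    filter_upwards [hLtend.eventually (hu.eventually (by simp))] with s hs
    exact ((hs.differentiableAt (by simp)).hasFDerivAt.comp_hasDerivAt s (hL s)).deriv
  have hsecond : HasDerivAt (fun s => fderiv ℝ u (L s) v)
      (fderiv ℝ (fun y => fderiv ℝ u y v) (L 0) v) 0 :=
    (((hu.fderiv_right (m := 1) (by norm_num)).differentiableAt (by simp)).clm_apply
      (differentiableAt_const v)).hasFDerivAt.comp_hasDerivAt 0 (hL 0)
  rw [← hsecond.deriv, ← hderiv.deriv_eq]
  exact IsLocalMax.deriv_deriv_nonpos (h.comp_tendsto hLtend)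
    (hu.continuousAt.comp (hL 0).continuousAt)

theorem heatLaplacian_nonpos_of_isLocalMax {d : ℕ} {u : EuclideanSpace ℝ (Fin d) → ℝ}
    {x : EuclideanSpace ℝ (Fin d)} (h : IsLocalMax u x) (hu : ContDiffAt ℝ 2 u x) :
    heatLaplacian u x ≤ 0 :=
  Finset.sum_nonpos fun _ _ => h.fderiv_fderiv_apply_nonpos hu _

theorem heatLaplacian_neg {d : ℕ} (u : EuclideanSpace ℝ (Fin d) → ℝ)
    (x : EuclideanSpace ℝ (Fin d)) :
    heatLaplacian (fun y => -u y) x = -heatLaplacian u x := by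
  simp only [heatLaplacian, fderiv_fun_neg, neg_apply, Finset.sum_neg_distrib]

namespace IsClassicalHeatSolution

variable {d : ℕ} {Ω : Set (EuclideanSpace ℝ (Fin d))} {a T : ℝ}
  {w : ℝ → EuclideanSpace ℝ (Fin d) → ℝ}

theorem neg (hw : IsClassicalHeatSolution Ω a T w) :
    IsClassicalHeatSolution Ω a T (fun t x => -w t x) where
  continuousOn := hw.continuousOn.neg
  space_smooth t ht x hx := by
    obtain ⟨U, hU, hsm⟩ := hw.space_smooth t ht x hx
    exact ⟨U, hU, hsm.neg⟩
  heat_eq t ht x hx := by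
    simpa only [heatLaplacian_neg, mul_neg] using (hw.heat_eq t ht x hx).fun_neg
  boundary t ht x hx := by
    rw [hw.boundary t ht x hx, neg_zero]

theorem continuousOn_initial (hw : IsClassicalHeatSolution Ω a T w) (hT : 0 ≤ T) :
    ContinuousOn (w 0) (closure Ω) :=
  hw.continuousOn.comp (Continuous.prodMk_right 0).continuousOn
    fun _ hy => ⟨⟨le_rfl, hT⟩, hy⟩

theorem not_isMaxOn_sub_mul_of_mem_interior (hw : IsClassicalHeatSolution Ω a T w)
    (ha : 0 ≤ a) {ε : ℝ} (hε : 0 < ε) {t₀ : ℝ} {x₀ : EuclideanSpace ℝ (Fin d)}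
    (ht₀ : t₀ ∈ Ioc 0 T) (hx₀ : x₀ ∈ interior Ω)
    (hmax : IsMaxOn (fun p => w p.1 p.2 - ε * p.1) (Icc 0 T ×ˢ closure Ω) (t₀, x₀)) :
    False := by
  have htime : 0 ≤ a * heatLaplacian (w t₀) x₀ - ε := by
    refine IsLocalMaxOn.hasDerivWithinAt_Iic_nonneg (f := fun τ => w τ x₀ - ε * τ) (t := t₀)
      ?_ ?_
    · filter_upwards [nhdsWithin_le_nhds (Ioi_mem_nhds ht₀.1), self_mem_nhdsWithin]
        with τ hτ₀ hτ
      exact hmax (a := (τ, x₀)) ⟨⟨le_of_lt hτ₀, hτ.trans ht₀.2⟩, interior_subset_closure hx₀⟩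
    · simpa using ((hw.heat_eq t₀ ht₀ x₀ (interior_subset hx₀)).fun_sub
        ((hasDerivAt_id t₀).const_mul ε)).hasDerivWithinAt
  have hspace : heatLaplacian (w t₀) x₀ ≤ 0 := by
    obtain ⟨U, hU, hsm⟩ := hw.space_smooth t₀ ht₀ x₀ (interior_subset hx₀)
    refine heatLaplacian_nonpos_of_isLocalMax ?_ (hsm.contDiffAt hU)
    filter_upwards [mem_interior_iff_mem_nhds.1 hx₀] with y hy
    simpa using hmax (a := (t₀, y)) ⟨⟨ht₀.1.le, ht₀.2⟩, subset_closure hy⟩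
  linarith [mul_nonpos_of_nonneg_of_nonpos ha hspace]

theorem sub_mul_le_of_forall_initial_le (hw : IsClassicalHeatSolution Ω a T w)
    (hΩ : Bornology.IsBounded Ω) (ha : 0 ≤ a) {ε M : ℝ} (hε : 0 < ε) (hM₀ : 0 ≤ M)
    (hM : ∀ y ∈ closure Ω, w 0 y ≤ M) :
    ∀ t ∈ Icc 0 T, ∀ x ∈ closure Ω, w t x - ε * t ≤ M := by
  intro t ht x hx
  have hcont : ContinuousOn (fun p : ℝ × EuclideanSpace ℝ (Fin d) => w p.1 p.2 - ε * p.1)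
      (Icc 0 T ×ˢ closure Ω) :=
    hw.continuousOn.sub (continuous_const.mul continuous_fst).continuousOn
  obtain ⟨⟨t₀, x₀⟩, ⟨ht₀, hx₀⟩, hmax⟩ :=
    (isCompact_Icc.prod hΩ.isCompact_closure).exists_isMaxOn ⟨(t, x), ht, hx⟩ hcont
  refine (hmax (a := (t, x)) ⟨ht, hx⟩).trans ?_
  rcases ht₀.1.eq_or_lt with rfl | ht₀_pos
  · simpa using hM x₀ hx₀
  rw [closure_eq_interior_union_frontier] at hx₀
  rcases hx₀ with hx₀ | hx₀
  · exact (hw.not_isMaxOn_sub_mul_of_mem_interior ha hε ⟨ht₀_pos, ht₀.2⟩ hx₀ hmax).elim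
  · simp only [hw.boundary t₀ ht₀ x₀ hx₀]
    linarith [mul_pos hε ht₀_pos]

theorem le_of_forall_initial_le (hw : IsClassicalHeatSolution Ω a T w)
    (hΩ : Bornology.IsBounded Ω) (ha : 0 ≤ a) {M : ℝ} (hM₀ : 0 ≤ M)
    (hM : ∀ y ∈ closure Ω, w 0 y ≤ M) :
    ∀ t ∈ Icc 0 T, ∀ x ∈ closure Ω, w t x ≤ M := by
  intro t ht x hx
  have hlim : Tendsto (fun ε => M + ε * t) (𝓝[>] 0) (𝓝 M) :=
    ((by fun_prop : Continuous fun ε : ℝ => M + ε * t).tendsto' 0 M (by simp)).mono_left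
      nhdsWithin_le_nhds
  refine ge_of_tendsto hlim (eventually_nhdsWithin_of_forall fun ε hε => ?_)
  linarith [hw.sub_mul_le_of_forall_initial_le hΩ ha hε hM₀ hM t ht x hx]

end IsClassicalHeatSolution

theorem heat_maximum_principle_general {d : ℕ}
    (Ω : Set (EuclideanSpace ℝ (Fin d)))
    (hΩbdd : Bornology.IsBounded Ω)
    (a T : ℝ) (ha : 0 < a)
    (w : ℝ → EuclideanSpace ℝ (Fin d) → ℝ)
    (hw : IsClassicalHeatSolution Ω a T w) :
    ∀ t ∈ Icc 0 T, ∀ x ∈ closure Ω,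
      |w t x| ≤ ⨆ y : closure Ω, |w 0 (y : EuclideanSpace ℝ (Fin d))| := by
  intro t ht x hx
  set M := ⨆ y : closure Ω, |w 0 (y : EuclideanSpace ℝ (Fin d))|
  have hbdd : BddAbove (range fun y : closure Ω => |w 0 (y : EuclideanSpace ℝ (Fin d))|) := by
    simpa only [image_eq_range] using hΩbdd.isCompact_closure.bddAbove_image
      (hw.continuousOn_initial (ht.1.trans ht.2)).abs
  have hM : ∀ y ∈ closure Ω, |w 0 y| ≤ M := fun y hy => le_ciSup hbdd ⟨y, hy⟩
  have hM₀ : 0 ≤ M := (abs_nonneg _).trans (hM x hx)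
  have hupper := hw.le_of_forall_initial_le hΩbdd ha.le hM₀
    (fun y hy => (le_abs_self _).trans (hM y hy)) t ht x hx
  have hlower := hw.neg.le_of_forall_initial_le hΩbdd ha.le hM₀
    (fun y hy => (neg_le_abs _).trans (hM y hy)) t ht x hx
  exact abs_le.2 ⟨by linarith, hupper⟩

/-- Maximum principle for the heat equation: the solution is bounded pointwise on
`[0,T] × closure Ω` by the sup norm of the initial data. -/
theorem heat_maximum_principle {d : ℕ} (hd : 0 < d)
    (Ω : Set (EuclideanSpace ℝ (Fin d))) (hΩopen : IsOpen Ω)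
    (hΩbdd : Bornology.IsBounded Ω) (hΩne : Ω.Nonempty)
    (a T : ℝ) (ha : 0 < a) (hT : 0 < T)
    (w : ℝ → EuclideanSpace ℝ (Fin d) → ℝ)
    (hw : IsClassicalHeatSolution Ω a T w) :
    ∀ t ∈ Icc 0 T, ∀ x ∈ closure Ω,
      |w t x| ≤ ⨆ y : closure Ω, |w 0 (y : EuclideanSpace ℝ (Fin d))| :=
  heat_maximum_principle_general Ω hΩbdd a T ha w hw
end

section
/- Suppose Φ : C([a,b];X) → C([a,b];X) satisfies both (i) ‖Φ(v)(t)‖ ≤ ψ + ∫_a^t L(s)·‖v(s)‖ ds for every v ∈ B and every t ∈ [a,b], and (ii) ‖Φ(v₁)(t) − Φ(v₂)(t)‖ ≤ ∫_a^t L(s)·‖v₁(s) − v₂(s)‖ ds for all v₁, v₂ ∈ B and all t ∈ [a,b]. If condition (★) holds, i.e. 1 + δ·∫_a^b L(s) ds ≤ δ, then Φ has a unique fixed point ρ in B. -/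
/-!
On the closed ball `B` the integral estimates give `‖Φ v‖ ≤ ψ + K ‖v‖` and
`‖Φ v₁ - Φ v₂‖ ≤ K ‖v₁ - v₂‖` with `K = ∫_a^b L`. Condition (★), multiplied by `ψ`,
reads `ψ + K δψ ≤ δψ`, so `Φ` maps `B` into itself, and forces `K < 1`, so `Φ` is a contraction
of the complete set `B`; Banach's fixed point theorem concludes.
-/

open Set MeasureTheory intervalIntegral

open scoped NNReal

theorem existsUnique_fixedPoint_of_lipschitzOnWith {α : Type*} [MetricSpace α] {f : α → α}
    {s : Set α} {K : ℝ≥0} (hK : K < 1) (hsc : IsComplete s) (hs : s.Nonempty)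
    (hsf : MapsTo f s s) (hf : LipschitzOnWith K f s) :
    ∃! x, x ∈ s ∧ f x = x := by
  have hc : ContractingWith K (hsf.restrict f s s) := ⟨hK, hf.mapsToRestrict hsf⟩
  obtain ⟨x₀, hx₀⟩ := hs
  obtain ⟨y, hys, hfy, -⟩ := hc.exists_fixedPoint' hsc hsf hx₀ (edist_ne_top _ _)
  refine ⟨y, ⟨hys, hfy⟩, fun z ⟨hzs, hfz⟩ => ?_⟩
  exact congrArg Subtype.val <|
    hc.fixedPoint_unique' (x := ⟨z, hzs⟩) (y := ⟨y, hys⟩) (Subtype.ext hfz) (Subtype.ext hfy)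

theorem integral_mul_norm_IccExtend_le {X : Type*} [NormedAddCommGroup X] {a b t : ℝ}
    (hab : a ≤ b) (ht : t ∈ Icc a b) {L : ℝ → ℝ} (hL0 : ∀ s, 0 ≤ L s)
    (hLint : IntervalIntegrable L volume a b) (v : C(Icc a b, X)) :
    ∫ s in a..t, L s * ‖IccExtend hab v s‖ ≤ (∫ s in a..b, L s) * ‖v‖ := by
  have hLt : IntervalIntegrable L volume a t :=
    hLint.mono_set (uIcc_subset_uIcc left_mem_uIcc (Icc_subset_uIcc ht))
  have hv : Continuous fun s => ‖IccExtend hab v s‖ := v.continuous.Icc_extend'.norm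
  calc ∫ s in a..t, L s * ‖IccExtend hab v s‖
      ≤ ∫ s in a..t, L s * ‖v‖ :=
        integral_mono_on ht.1 (hLt.mul_continuousOn hv.continuousOn) (hLt.mul_const _)
          fun s _ => mul_le_mul_of_nonneg_left (v.norm_coe_le_norm _) (hL0 s)
    _ = (∫ s in a..t, L s) * ‖v‖ := integral_mul_const _ _
    _ ≤ (∫ s in a..b, L s) * ‖v‖ := by
        gcongr
        exact integral_mono_interval le_rfl ht.1 ht.2 (.of_forall hL0) hLint

theorem fixed_point_of_star_general
    {X : Type*} [NormedAddCommGroup X] [CompleteSpace X]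
    (a b : ℝ) (hab : a < b)
    (L : ℝ → ℝ) (hL0 : ∀ s, 0 ≤ L s) (hLint : IntervalIntegrable L volume a b)
    (ψ δ : ℝ) (hψ : 0 < ψ) (hδ : 1 ≤ δ)
    (Φ : C(Icc a b, X) → C(Icc a b, X))
    (hΦmap : ∀ v ∈ Metric.closedBall (0 : C(Icc a b, X)) (δ * ψ), ∀ t : Icc a b,
      ‖Φ v t‖ ≤ ψ + ∫ s in a..(t : ℝ), L s * ‖IccExtend hab.le (⇑v) s‖)
    (hΦlip : ∀ v₁ ∈ Metric.closedBall (0 : C(Icc a b, X)) (δ * ψ),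
      ∀ v₂ ∈ Metric.closedBall (0 : C(Icc a b, X)) (δ * ψ), ∀ t : Icc a b,
      ‖Φ v₁ t - Φ v₂ t‖ ≤
        ∫ s in a..(t : ℝ), L s * ‖IccExtend hab.le (⇑v₁) s - IccExtend hab.le (⇑v₂) s‖)
    (hstar : 1 + δ * ∫ s in a..b, L s ≤ δ) :
    ∃! ρ : C(Icc a b, X),
      ρ ∈ Metric.closedBall (0 : C(Icc a b, X)) (δ * ψ) ∧ Φ ρ = ρ := by
  set K := ∫ s in a..b, L s
  have hK0 : 0 ≤ K := integral_nonneg hab.le fun s _ => hL0 s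
  have hK1 : K < 1 := by nlinarith
  have hr : 0 ≤ δ * ψ := by positivity
  have hmaps : MapsTo Φ (Metric.closedBall 0 (δ * ψ)) (Metric.closedBall 0 (δ * ψ)) := by
    intro v hv
    have hvr : ‖v‖ ≤ δ * ψ := mem_closedBall_zero_iff.mp hv
    refine mem_closedBall_zero_iff.mpr <| (ContinuousMap.norm_le _ hr).mpr fun t => ?_
    calc ‖Φ v t‖ ≤ ψ + K * ‖v‖ :=
          (hΦmap v hv t).trans (by gcongr; exact integral_mul_norm_IccExtend_le _ t.2 hL0 hLint v)
      _ ≤ ψ + K * (δ * ψ) := by gcongr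
      _ ≤ δ * ψ := by nlinarith
  have hlip : LipschitzOnWith K.toNNReal Φ (Metric.closedBall 0 (δ * ψ)) := by
    refine LipschitzOnWith.of_dist_le' fun v₁ h₁ v₂ h₂ => ?_
    refine (ContinuousMap.dist_le (by positivity)).mpr fun t => ?_
    rw [dist_eq_norm, dist_eq_norm]
    exact (hΦlip v₁ h₁ v₂ h₂ t).trans
      (integral_mul_norm_IccExtend_le hab.le t.2 hL0 hLint (v₁ - v₂))
  exact existsUnique_fixedPoint_of_lipschitzOnWith (Real.toNNReal_lt_one.mpr hK1)
    Metric.isClosed_closedBall.isComplete ⟨0, Metric.mem_closedBall_self hr⟩ hmaps hlip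

/-- Banach fixed point argument: if `Φ : C([a,b];X) → C([a,b];X)` satisfies the mapping
estimate `‖Φ(v)(t)‖ ≤ ψ + ∫_a^t L(s)·‖v(s)‖ ds` on the closed ball `B` of radius `δψ`
about zero, the contraction estimate
`‖Φ(v₁)(t) − Φ(v₂)(t)‖ ≤ ∫_a^t L(s)·‖v₁(s) − v₂(s)‖ ds` on `B`, and condition (★)
`1 + δ·∫_a^b L ≤ δ` holds, then `Φ` has a unique fixed point in `B`. -/
theorem fixed_point_of_star
    {X : Type*} [NormedAddCommGroup X] [NormedSpace ℝ X] [CompleteSpace X]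
    (a b : ℝ) (hab : a < b)
    (L : ℝ → ℝ) (hL0 : ∀ s, 0 ≤ L s) (hLint : IntervalIntegrable L volume a b)
    (ψ δ : ℝ) (hψ : 0 < ψ) (hδ : 1 ≤ δ)
    (Φ : C(Icc a b, X) → C(Icc a b, X))
    (hΦmap : ∀ v ∈ Metric.closedBall (0 : C(Icc a b, X)) (δ * ψ), ∀ t : Icc a b,
      ‖Φ v t‖ ≤ ψ + ∫ s in a..(t : ℝ), L s * ‖IccExtend hab.le (⇑v) s‖)
    (hΦlip : ∀ v₁ ∈ Metric.closedBall (0 : C(Icc a b, X)) (δ * ψ),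
      ∀ v₂ ∈ Metric.closedBall (0 : C(Icc a b, X)) (δ * ψ), ∀ t : Icc a b,
      ‖Φ v₁ t - Φ v₂ t‖ ≤
        ∫ s in a..(t : ℝ), L s * ‖IccExtend hab.le (⇑v₁) s - IccExtend hab.le (⇑v₂) s‖)
    (hstar : 1 + δ * ∫ s in a..b, L s ≤ δ) :
    ∃! ρ : C(Icc a b, X),
      ρ ∈ Metric.closedBall (0 : C(Icc a b, X)) (δ * ψ) ∧ Φ ρ = ρ :=
  fixed_point_of_star_general a b hab L hL0 hLint ψ δ hψ hδ Φ hΦmap hΦlip hstar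
end

section
/- Let t₀ ∈ ℝ, let ψ > 0, let c : ℝ → ℝ be continuous and nonnegative, and let 𝓛 : ℝ × ℝ × ℝ → ℝ be continuous, nonnegative, and nondecreasing in its second and third arguments. For k > 0 define φ_k : [1,∞) → ℝ by φ_k(δ) := 1 + δ·(∫_{t₀}^{t₀+k} 𝓛(s, δψ + c(s), δψ + c(s)) ds − 1). Then there exists k₀ > 0 such that for every k with 0 < k ≤ k₀, the function φ_k has a root in [1,∞). (This is the lemma asserting that if the time step length k_m is small enough then φ_m has a root in [1,∞).) -/
/-!
The integral term of `φ_k` depends continuously on `δ`, so `φ_k` is continuous.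
At `δ = 1` it equals the integral itself, which is nonnegative; at `δ = 2` it equals
`2 ∫ 𝓛(s, 2ψ + c(s), 2ψ + c(s)) ds - 1`, which is negative once `k` is so small that this
integral is at most `1/2`. The intermediate value theorem gives a root in `[1, 2]`.
-/

open MeasureTheory intervalIntegral Set Filter Topology

theorem exists_root_one_add_mul_sub_one {I : ℝ → ℝ} (hI : ContinuousOn I (Icc 1 2))
    (h₁ : 0 ≤ I 1) (h₂ : I 2 ≤ 1 / 2) : ∃ δ ∈ Icc (1 : ℝ) 2, 1 + δ * (I δ - 1) = 0 := by
  have hφ : ContinuousOn (fun δ => 1 + δ * (I δ - 1)) (Icc 1 2) := by fun_prop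
  refine intermediate_value_Icc' one_le_two hφ ⟨?_, ?_⟩ <;> linarith

theorem exists_pos_forall_intervalIntegral_le {f : ℝ → ℝ} (hf : Continuous f) (a : ℝ)
    {ε : ℝ} (hε : 0 < ε) : ∃ k₀ > 0, ∀ k, 0 < k → k ≤ k₀ → ∫ s in a..(a + k), f s ≤ ε := by
  have hF : Continuous fun k => ∫ s in a..(a + k), f s :=
    (continuous_primitive (fun _ _ => hf.intervalIntegrable _ _) a).comp
      (continuous_const.add continuous_id)
  have hsmall : ∀ᶠ k in 𝓝 0, ∫ s in a..(a + k), f s < ε :=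
    hF.continuousAt.eventually_lt continuousAt_const (by simpa using hε)
  obtain ⟨k₀, hk₀, hIoc⟩ := mem_nhdsGT_iff_exists_Ioc_subset.mp
    (nhdsWithin_le_nhds hsmall)
  exact ⟨k₀, hk₀, fun k hk hkk => (hIoc ⟨hk, hkk⟩).le⟩

theorem phi_has_root_for_small_timestep_general
    (t₀ : ℝ) (ψ : ℝ)
    (c : ℝ → ℝ) (hc_cont : Continuous c)
    (𝓛 : ℝ → ℝ → ℝ → ℝ)
    (h𝓛_cont : Continuous fun p : ℝ × ℝ × ℝ => 𝓛 p.1 p.2.1 p.2.2)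
    (h𝓛_nonneg : ∀ s x y, 0 ≤ 𝓛 s x y) :
    ∃ k₀ > 0, ∀ k : ℝ, 0 < k → k ≤ k₀ →
      ∃ δ : ℝ, 1 ≤ δ ∧
        1 + δ * ((∫ s in t₀..(t₀ + k), 𝓛 s (δ * ψ + c s) (δ * ψ + c s)) - 1) = 0 := by
  set g : ℝ → ℝ → ℝ := fun δ s => 𝓛 s (δ * ψ + c s) (δ * ψ + c s)
  have hg : Continuous (Function.uncurry g) :=
    h𝓛_cont.comp (f := fun p : ℝ × ℝ => (p.2, p.1 * ψ + c p.2, p.1 * ψ + c p.2)) (by fun_prop)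
  obtain ⟨k₀, hk₀, hsmall⟩ :=
    exists_pos_forall_intervalIntegral_le (hg.comp (Continuous.prodMk_right 2)) t₀ one_half_pos
  refine ⟨k₀, hk₀, fun k hk hkk => ?_⟩
  obtain ⟨δ, hδ, hroot⟩ := exists_root_one_add_mul_sub_one
    (continuous_parametric_intervalIntegral_of_continuous' hg t₀ (t₀ + k)).continuousOn
    (integral_nonneg (by linarith) fun s _ => h𝓛_nonneg _ _ _) (hsmall k hk hkk)
  exact ⟨δ, hδ.1, hroot⟩

/-- If the time step length `k` is small enough then the function
`φ_k(δ) = 1 + δ·(∫_{t₀}^{t₀+k} 𝓛(s, δψ + c(s), δψ + c(s)) ds − 1)` has a root in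
`[1,∞)`. -/
theorem phi_has_root_for_small_timestep
    (t₀ : ℝ) (ψ : ℝ) (hψ : 0 < ψ)
    (c : ℝ → ℝ) (hc_cont : Continuous c) (hc_nonneg : ∀ s, 0 ≤ c s)
    (𝓛 : ℝ → ℝ → ℝ → ℝ)
    (h𝓛_cont : Continuous fun p : ℝ × ℝ × ℝ => 𝓛 p.1 p.2.1 p.2.2)
    (h𝓛_nonneg : ∀ s x y, 0 ≤ 𝓛 s x y)
    (h𝓛_mono₂ : ∀ s y, Monotone fun x => 𝓛 s x y)
    (h𝓛_mono₃ : ∀ s x, Monotone fun y => 𝓛 s x y) :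
    ∃ k₀ > 0, ∀ k : ℝ, 0 < k → k ≤ k₀ →
      ∃ δ : ℝ, 1 ≤ δ ∧
        1 + δ * ((∫ s in t₀..(t₀ + k), 𝓛 s (δ * ψ + c s) (δ * ψ + c s)) - 1) = 0 :=
  phi_has_root_for_small_timestep_general t₀ ψ c hc_cont 𝓛 h𝓛_cont h𝓛_nonneg
end
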